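/- A pseudo-non-degenerate two-ruled hypersurface f(t,s,r)=γ(t)+sX(t)+rY(t) in ℝ⁴ (normalized, with associated functions a,b₁,b₂,b₃,b₄ and ω=ab₂+b₁−b₃') is of tangent developable type if and only if ω(t)=0 and b₄(t)=0 for all t near 0. -/

import Mathlib

open scoped Topology
open Filter

noncomputable section

/-- Ambient space `ℝ⁴`. -/
abbrev E4 := Fin 4 → ℝ

/-- The standard inner product on `ℝ⁴`. -/
def dot4 (u v : E4) : ℝ := ∑ i, u i * v i

/-- `det(u,v,w,x)` for four vectors of `ℝ⁴`. -/
def det4 (u v w x : E4) : ℝ := Matrix.det (Matrix.of ![u, v, w, x])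

/-- The triple exterior (cross) product `u ∧ v ∧ w` in `ℝ⁴`. -/
def tcross (u v w : E4) : E4 := fun i => det4 (Pi.single i 1) u v w

lemma det4_expand (u v w x : E4) : det4 u v w x =
    u 0 * (v 1 * (w 2 * x 3 - w 3 * x 2) - v 2 * (w 1 * x 3 - w 3 * x 1) + v 3 * (w 1 * x 2 - w 2 * x 1))
  - u 1 * (v 0 * (w 2 * x 3 - w 3 * x 2) - v 2 * (w 0 * x 3 - w 3 * x 0) + v 3 * (w 0 * x 2 - w 2 * x 0))
  + u 2 * (v 0 * (w 1 * x 3 - w 3 * x 1) - v 1 * (w 0 * x 3 - w 3 * x 0) + v 3 * (w 0 * x 1 - w 1 * x 0))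
  - u 3 * (v 0 * (w 1 * x 2 - w 2 * x 1) - v 1 * (w 0 * x 2 - w 2 * x 0) + v 2 * (w 0 * x 1 - w 1 * x 0)) := by
  rw [det4, Matrix.det_succ_row_zero]
  simp only [Fin.sum_univ_four, Matrix.det_fin_three, Matrix.submatrix_apply,
    show (Fin.succAbove (0:Fin 4) 0) = 1 from rfl,
    show (Fin.succAbove (0:Fin 4) 1) = 2 from rfl,
    show (Fin.succAbove (0:Fin 4) 2) = 3 from rfl,
    show (Fin.succAbove (1:Fin 4) 0) = 0 from rfl,
    show (Fin.succAbove (1:Fin 4) 1) = 2 from rfl,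
    show (Fin.succAbove (1:Fin 4) 2) = 3 from rfl,
    show (Fin.succAbove (2:Fin 4) 0) = 0 from rfl,
    show (Fin.succAbove (2:Fin 4) 1) = 1 from rfl,
    show (Fin.succAbove (2:Fin 4) 2) = 3 from rfl,
    show (Fin.succAbove (3:Fin 4) 0) = 0 from rfl,
    show (Fin.succAbove (3:Fin 4) 1) = 1 from rfl,
    show (Fin.succAbove (3:Fin 4) 2) = 2 from rfl,
    show (Fin.succ (0:Fin 3) : Fin 4) = 1 from rfl,
    show (Fin.succ (1:Fin 3) : Fin 4) = 2 from rfl,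
    show (Fin.succ (2:Fin 3) : Fin 4) = 3 from rfl]
  norm_num [Matrix.of_apply, show ((3:Fin 4):ℕ)=3 from rfl]
  simp only [Matrix.cons_val_zero, Matrix.cons_val_one, Matrix.cons_val_two, Matrix.cons_val_three, Matrix.tail_cons, Matrix.head_cons, Matrix.vecHead]
  ring

lemma dot4_tcross (u v w x : E4) : dot4 (tcross u v w) x = det4 x u v w := by
  simp only [dot4, tcross, det4_expand, Fin.sum_univ_four, Pi.single_apply,
    Fin.ext_iff, show ((3:Fin 4):ℕ)=3 from rfl, show ((2:Fin 4):ℕ)=2 from rfl,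
    show ((1:Fin 4):ℕ)=1 from rfl, show ((0:Fin 4):ℕ)=0 from rfl]
  norm_num
  ring

lemma det4_12 (u v w : E4) : det4 u u v w = 0 := by rw [det4_expand]; ring
lemma det4_13 (u v w : E4) : det4 v u v w = 0 := by rw [det4_expand]; ring

lemma dot4_comm (u v : E4) : dot4 u v = dot4 v u := by simp [dot4, mul_comm]
lemma dot4_add_left (u v w : E4) : dot4 (u + v) w = dot4 u w + dot4 v w := by
  simp [dot4, add_mul, Finset.sum_add_distrib]
lemma dot4_smul_left (c : ℝ) (u w : E4) : dot4 (c • u) w = c * dot4 u w := by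
  simp [dot4, Finset.mul_sum, mul_assoc]
lemma dot4_add_right (u v w : E4) : dot4 u (v + w) = dot4 u v + dot4 u w := by
  rw [dot4_comm, dot4_add_left, dot4_comm v u, dot4_comm w u]
lemma dot4_smul_right (c : ℝ) (u w : E4) : dot4 u (c • w) = c * dot4 u w := by
  rw [dot4_comm, dot4_smul_left, dot4_comm]
lemma dot4_zero_left (u : E4) : dot4 0 u = 0 := by simp [dot4]
lemma dot4_sub_left (u v w : E4) : dot4 (u - v) w = dot4 u w - dot4 v w := by
  simp [dot4, sub_mul, Finset.sum_sub_distrib]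

lemma eq_zero_of_dot4_self (u : E4) (h : dot4 u u = 0) : u = 0 := by
  have h2 := (Finset.sum_eq_zero_iff_of_nonneg (fun i _ => mul_self_nonneg (u i))).mp h
  funext i
  exact mul_self_eq_zero.mp (h2 i (Finset.mem_univ i))

lemma dot4_tcross_pos {x y w : E4} (h : LinearIndependent ℝ ![x, y, w]) :
    tcross x y w ≠ 0 := by
  -- span of three vectors is not all of ℝ⁴
  have hlt : Submodule.span ℝ (Set.range ![x, y, w]) < ⊤ := by
    apply span_lt_top_of_card_lt_finrank
    calc (Set.range ![x, y, w]).toFinset.card ≤ 3 := by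
          rw [Set.toFinset_range]
          exact (Finset.card_image_le).trans (by simp)
      _ < Module.finrank ℝ E4 := by simp [Module.finrank_fin_fun]
  obtain ⟨c, -, hc⟩ := SetLike.exists_of_lt hlt
  have hli4 : LinearIndependent ℝ ![c, x, y, w] :=
    linearIndependent_fin_cons.mpr ⟨h, hc⟩
  have hdet : det4 c x y w ≠ 0 := by
    intro h0
    have hu : IsUnit (Matrix.of ![c, x, y, w]) :=
      Matrix.linearIndependent_rows_iff_isUnit.mp (by exact hli4)
    have : IsUnit (Matrix.of ![c, x, y, w]).det :=
      (Matrix.isUnit_iff_isUnit_det _).mp hu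
    rw [det4] at h0
    exact this.ne_zero h0
  intro h0
  apply hdet
  rw [← dot4_tcross, h0, dot4_zero_left]

lemma key (a α β b₄ : ℝ) (x y x' : E4)
    (hxx : dot4 x x = 1) (hxy : dot4 x y = 0) (hyy : dot4 y y = 1)
    (hli : LinearIndependent ℝ ![x, y, x']) :
    (¬ LinearIndependent ℝ
      ![α • x + β • y + b₄ • tcross x y x',
        (Real.sqrt (dot4 (-a • x + y) (-a • x + y)))⁻¹ • (-a • x + y)]) ↔
      (a * β + α = 0 ∧ b₄ = 0) := by
  set z := tcross x y x' with hz
  set w := -a • x + y with hw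
  set u := α • x + β • y + b₄ • z with hu
  have hyx : dot4 y x = 0 := by rw [dot4_comm]; exact hxy
  have hzx : dot4 z x = 0 := by rw [hz, dot4_tcross]; exact det4_12 x y x'
  have hzy : dot4 z y = 0 := by rw [hz, dot4_tcross]; exact det4_13 x y x'
  have hxz : dot4 x z = 0 := by rw [dot4_comm]; exact hzx
  have hyz : dot4 y z = 0 := by rw [dot4_comm]; exact hzy
  have hzne : z ≠ 0 := dot4_tcross_pos hli
  have hzz : dot4 z z ≠ 0 := fun h => hzne (eq_zero_of_dot4_self z h)
  have hww : dot4 w w = a ^ 2 + 1 := by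
    rw [hw, dot4_add_left, dot4_add_right, dot4_add_right, dot4_smul_left,
      dot4_smul_left, dot4_smul_right, dot4_smul_right, hxx, hxy, hyx, hyy]
    ring
  have hs : Real.sqrt (dot4 w w) ≠ 0 := by
    rw [hww]; positivity
  set c := (Real.sqrt (dot4 w w))⁻¹ with hc
  have hcne : c ≠ 0 := inv_ne_zero hs
  -- dot products with u
  have hux : dot4 u x = α := by
    rw [hu, dot4_add_left, dot4_add_left, dot4_smul_left, dot4_smul_left,
      dot4_smul_left, hxx, hyx, hzx]; ring
  have huy : dot4 u y = β := by
    rw [hu, dot4_add_left, dot4_add_left, dot4_smul_left, dot4_smul_left,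
      dot4_smul_left, hxy, hyy, hzy]; ring
  have huz : dot4 u z = b₄ * dot4 z z := by
    rw [hu, dot4_add_left, dot4_add_left, dot4_smul_left, dot4_smul_left,
      dot4_smul_left, hxz, hyz]; ring
  have hwx : dot4 w x = -a := by
    rw [hw, dot4_add_left, dot4_smul_left, hxx, hyx]; ring
  have hwy : dot4 w y = 1 := by
    rw [hw, dot4_add_left, dot4_smul_left, hxy, hyy]; ring
  have hwz : dot4 w z = 0 := by
    rw [hw, dot4_add_left, dot4_smul_left, hxz, hyz]; ring
  have hvne : c • w ≠ 0 := by
    intro h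
    have : dot4 (c • w) y = 0 := by rw [h, dot4_zero_left]
    rw [dot4_smul_left, hwy, mul_one] at this
    exact hcne this
  rw [linearIndependent_fin2]
  push_neg
  simp only [Matrix.cons_val_one, Matrix.head_cons, Matrix.cons_val_zero]
  constructor
  · intro h
    obtain ⟨lam, hlam⟩ := h hvne
    · set μ := lam * c with hμ
      have hmu : μ • w = u := by rw [hμ, ← smul_smul]; exact hlam
      have e1 : dot4 (μ • w) z = dot4 u z := by rw [hmu]
      rw [dot4_smul_left, hwz, mul_zero, huz] at e1
      have hb4 : b₄ = 0 := by
        rcases mul_eq_zero.mp e1.symm with h | h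
        · exact h
        · exact absurd h hzz
      have e2 : dot4 (μ • w) x = dot4 u x := by rw [hmu]
      rw [dot4_smul_left, hwx, hux] at e2
      have e3 : dot4 (μ • w) y = dot4 u y := by rw [hmu]
      rw [dot4_smul_left, hwy, huy, mul_one] at e3
      refine ⟨?_, hb4⟩
      rw [← e2, ← e3]; ring
  · rintro ⟨hω, hb4⟩ _
    refine ⟨β * Real.sqrt (dot4 w w), ?_⟩
    have : (β * Real.sqrt (dot4 w w)) • c • w = β • w := by
      rw [smul_smul, hc, mul_assoc, mul_inv_cancel₀ hs, mul_one]
    rw [this, hu, hb4, zero_smul, add_zero, hw, smul_add, smul_smul]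
    congr 1
    have : β * -a = α := by linarith
    rw [this]

/-- A pseudo-non-degenerate two-ruled hypersurface (normalized) is of tangent developable
type (the directrix `γ̃ = γ − b₃X` of its striction surface has `γ̃'(t)` linearly dependent
with `X̃(t)` for all `t` near `0`) if and only if `ω ≡ 0` and `b₄ ≡ 0` near `0`. -/
theorem stmt9 (γ X Y : ℝ → E4) (a b₁ b₂ b₃ b₄ : ℝ → ℝ)
    (hγ : ContDiff ℝ (⊤ : ℕ∞) γ) (hX : ContDiff ℝ (⊤ : ℕ∞) X) (hY : ContDiff ℝ (⊤ : ℕ∞) Y)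
    (ha : ContDiff ℝ (⊤ : ℕ∞) a) (hb₁ : ContDiff ℝ (⊤ : ℕ∞) b₁) (hb₂ : ContDiff ℝ (⊤ : ℕ∞) b₂)
    (hb₃ : ContDiff ℝ (⊤ : ℕ∞) b₃) (hb₄ : ContDiff ℝ (⊤ : ℕ∞) b₄)
    -- constrictively adapted director curves
    (hXunit : ∀ᶠ t in 𝓝 (0:ℝ), dot4 (X t) (X t) = 1)
    (hYunit : ∀ᶠ t in 𝓝 (0:ℝ), dot4 (Y t) (Y t) = 1)
    (hXY : ∀ᶠ t in 𝓝 (0:ℝ), dot4 (X t) (Y t) = 0)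
    (hXY' : ∀ᶠ t in 𝓝 (0:ℝ), dot4 (X t) (deriv Y t) = 0)
    -- normalization
    (hspan : ∀ᶠ t in 𝓝 (0:ℝ), LinearIndependent ℝ ![X t, Y t, deriv X t])
    (hX'unit : ∀ᶠ t in 𝓝 (0:ℝ), dot4 (deriv X t) (deriv X t) = 1)
    -- structure functions
    (hY' : ∀ᶠ t in 𝓝 (0:ℝ), deriv Y t = a t • deriv X t)
    (hγ' : ∀ᶠ t in 𝓝 (0:ℝ), deriv γ t =
      b₁ t • X t + b₂ t • Y t + b₃ t • deriv X t +
        b₄ t • tcross (X t) (Y t) (deriv X t))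
    (γtil Xtil : ℝ → E4) (ω : ℝ → ℝ)
    (hγtil : γtil = fun t => γ t - b₃ t • X t)
    (hXtil : Xtil = fun t =>
      (Real.sqrt (dot4 (-(a t) • X t + Y t) (-(a t) • X t + Y t)))⁻¹ •
        (-(a t) • X t + Y t))
    (hω : ω = fun t => a t * b₂ t + b₁ t - deriv b₃ t) :
    (∀ᶠ t in 𝓝 (0:ℝ), ¬ LinearIndependent ℝ ![deriv γtil t, Xtil t]) ↔
    (∀ᶠ t in 𝓝 (0:ℝ), ω t = 0 ∧ b₄ t = 0) := by
  apply Filter.eventually_congr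
  filter_upwards [hXunit, hYunit, hXY, hspan, hγ'] with t h1 h2 h3 h4 h5
  have hdtil : deriv γtil t =
      (b₁ t - deriv b₃ t) • X t + b₂ t • Y t +
        b₄ t • tcross (X t) (Y t) (deriv X t) := by
    have hdγ : DifferentiableAt ℝ γ t := (hγ.differentiable (by simp)).differentiableAt
    have hdX : DifferentiableAt ℝ X t := (hX.differentiable (by simp)).differentiableAt
    have hdb₃ : DifferentiableAt ℝ b₃ t := (hb₃.differentiable (by simp)).differentiableAt
    have : deriv γtil t = deriv γ t - (b₃ t • deriv X t + deriv b₃ t • X t) := by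
      rw [hγtil, deriv_fun_sub (g := fun y => b₃ y • X y) hdγ (hdb₃.smul hdX), deriv_fun_smul hdb₃ hdX]
    rw [this, h5]
    module
  rw [hdtil, hXtil, hω]
  have := key (a t) (b₁ t - deriv b₃ t) (b₂ t) (b₄ t) (X t) (Y t) (deriv X t)
    h1 h3 h2 h4
  simp only [neg_smul] at this ⊢
  rw [this]
  constructor
  · rintro ⟨h, h'⟩; exact ⟨by linarith, h'⟩
  · rintro ⟨h, h'⟩; exact ⟨by linarith, h'⟩
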